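/- Let (Z₁, Z₂) be a max-mixture pair with mixing coefficient a ∈ (0,1) and extremal coefficients θ_X, θ_Y ∈ [1,2], and let λ > 0. Then E[ max(F(Z₁)^λ, F(Z₂)^λ) ] = 1 − 2λ/(a(θ_X−1)+1+λ) + λ/(aθ_X+λ) − (λ θ_Y/((1−a)θ_Y + aθ_X + λ))·B((aθ_X+λ)/(1−a), θ_Y). -/

import Mathlib

open MeasureTheory Real Filter intervalIntegral Set

/-- The Beta function `B(x,y) = ∫₀¹ t^(x-1) (1-t)^(y-1) dt`. -/
noncomputable def Beta (x y : ℝ) : ℝ := ∫ t in (0:ℝ)..1, t ^ (x - 1) * (1 - t) ^ (y - 1)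

lemma Beta_eq_complex {x y : ℝ} (hx : 0 < x) (hy : 0 < y) :
    Complex.betaIntegral x y = ((Beta x y : ℝ) : ℂ) := by
  rw [Complex.betaIntegral, Beta, ← intervalIntegral.integral_ofReal]
  apply intervalIntegral.integral_congr
  intro t ht
  rw [Set.uIcc_of_le (by norm_num)] at ht
  have h1 : ((x : ℂ) - 1) = ((x - 1 : ℝ) : ℂ) := by push_cast; ring
  have h2 : ((y : ℂ) - 1) = ((y - 1 : ℝ) : ℂ) := by push_cast; ring
  have h3 : ((1 : ℂ) - (t : ℂ)) = ((1 - t : ℝ) : ℂ) := by push_cast; ring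
  show (t:ℂ) ^ ((x:ℂ) - 1) * (1 - (t:ℂ)) ^ ((y:ℂ) - 1) = ((t ^ (x - 1) * (1 - t) ^ (y - 1) : ℝ) : ℂ)
  rw [h1, h2, h3, ← Complex.ofReal_cpow ht.1, ← Complex.ofReal_cpow (by linarith [ht.2] : (0:ℝ) ≤ 1 - t),
    ← Complex.ofReal_mul]

lemma cont_rpow {c : ℝ} (hc : 0 < c) : Continuous fun x : ℝ => x ^ c := by
  rw [continuous_iff_continuousAt]
  exact fun x => Real.continuousAt_rpow_const x c (Or.inr hc.le)

lemma betaIntegrand_integrable {x y : ℝ} (hx : 0 < x) (hy : 0 < y) :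
    IntervalIntegrable (fun t : ℝ => t ^ (x - 1) * (1 - t) ^ (y - 1)) volume 0 1 := by
  have h1 : IntervalIntegrable (fun t : ℝ => t ^ (x - 1) * (1 - t) ^ (y - 1)) volume 0 (1/2) := by
    apply (intervalIntegral.intervalIntegrable_rpow' (by linarith)).mul_continuousOn
    apply ContinuousOn.rpow_const (by fun_prop)
    intro t ht
    rw [Set.uIcc_of_le (by norm_num)] at ht
    left; intro h; rw [sub_eq_zero] at h; linarith [ht.2]
  have h2 : IntervalIntegrable (fun t : ℝ => t ^ (x - 1) * (1 - t) ^ (y - 1)) volume (1/2) 1 := by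
    have hb : IntervalIntegrable (fun t : ℝ => (1 - t) ^ (y - 1)) volume (1/2) 1 := by
      have := (intervalIntegral.intervalIntegrable_rpow' (a:=0) (b:=1/2) (r:=y-1)
        (by linarith)).comp_sub_left 1
      norm_num at this
      exact this.symm
    have := hb.continuousOn_mul (g := fun t : ℝ => t ^ (x - 1)) ?_
    · simpa [mul_comm] using this
    · apply ContinuousOn.rpow_const (by fun_prop)
      intro t ht
      rw [Set.uIcc_of_le (by norm_num)] at ht
      left; intro h; rw [h] at ht; norm_num at ht
  exact h1.trans h2

lemma Beta_add {x y : ℝ} (hx : 0 < x) (hy : 0 < y) :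
    Beta x y = Beta (x + 1) y + Beta x (y + 1) := by
  rw [Beta, Beta, Beta, ← intervalIntegral.integral_add
    (by simpa using betaIntegrand_integrable (by linarith : (0:ℝ) < x + 1) hy)
    (by simpa using betaIntegrand_integrable hx (by linarith : (0:ℝ) < y + 1))]
  apply intervalIntegral.integral_congr
  intro t ht
  rw [Set.uIcc_of_le (by norm_num)] at ht
  simp only [add_sub_cancel_right]
  rcases eq_or_lt_of_le ht.1 with h0 | h0
  · -- t = 0
    rw [← h0]
    simp [Real.one_rpow, Real.zero_rpow (ne_of_gt hx)]
  rcases eq_or_lt_of_le ht.2 with h1 | h1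
  · -- t = 1
    rw [h1]
    rw [(by norm_num : (1:ℝ) - 1 = 0)]
    simp [Real.one_rpow, Real.zero_rpow (ne_of_gt hy)]
  · have hx' : t ^ x = t ^ (x - 1) * t := by
      rw [← Real.rpow_add_one (ne_of_gt h0)]; ring_nf
    have hy' : (1 - t) ^ y = (1 - t) ^ (y - 1) * (1 - t) := by
      rw [← Real.rpow_add_one (by intro h; rw [sub_eq_zero] at h; linarith)]; ring_nf
    rw [hx', hy']
    ring

lemma Beta_rec {x y : ℝ} (hx : 0 < x) (hy : 0 < y) :
    Beta x (y + 1) = y / (x + y) * Beta x y := by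
  have hrec := Complex.betaIntegral_recurrence (u := x) (v := y) (by simpa using hx) (by simpa using hy)
  have e1 : ((x : ℂ) + 1) = ((x + 1 : ℝ) : ℂ) := by push_cast; ring
  have e2 : ((y : ℂ) + 1) = ((y + 1 : ℝ) : ℂ) := by push_cast; ring
  rw [e1, e2, Beta_eq_complex hx (by linarith), Beta_eq_complex (by linarith) hy] at hrec
  have hrecR : x * Beta x (y + 1) = y * Beta (x + 1) y := by
    exact_mod_cast hrec
  have hadd := Beta_add hx hy
  have hxy : x + y ≠ 0 := by positivity
  field_simp
  nlinarith [hrecR, hadd]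
open MeasureTheory Real Filter intervalIntegral Set

lemma sub_rpow {p : ℝ} (hp : 0 < p) {g : ℝ → ℝ}
    (hg1 : IntegrableOn g (Icc 0 1)) (hgc : ContinuousOn g (Ioo 0 1))
    (hg2 : IntegrableOn (fun x => g (x ^ p) * (p * x ^ (p - 1))) (Icc 0 1)) :
    ∫ x in (0:ℝ)..1, g (x ^ p) * (p * x ^ (p - 1)) = ∫ u in (0:ℝ)..1, g u := by
  have key := intervalIntegral.integral_comp_mul_deriv''' (a := 0) (b := 1)
    (f := fun x : ℝ => x ^ p) (f' := fun x : ℝ => p * x ^ (p - 1)) (g := g)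
    ((cont_rpow hp).continuousOn)
    (by
      intro x hx
      simp only [(by norm_num : (0:ℝ) ⊓ 1 = 0), (by norm_num : (0:ℝ) ⊔ 1 = 1)] at hx
      exact (Real.hasDerivAt_rpow_const (Or.inl (ne_of_gt hx.1))).hasDerivWithinAt)
    (by
      apply hgc.mono
      simp only [(by norm_num : (0:ℝ) ⊓ 1 = 0), (by norm_num : (0:ℝ) ⊔ 1 = 1)]
      rintro u ⟨x, hx, rfl⟩
      exact ⟨Real.rpow_pos_of_pos hx.1 p, Real.rpow_lt_one hx.1.le hx.2 hp⟩)
    (by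
      apply hg1.mono_set
      rintro u ⟨x, hx, rfl⟩
      rw [Set.uIcc_of_le (by norm_num)] at hx
      exact ⟨Real.rpow_nonneg hx.1 p, Real.rpow_le_one hx.1 hx.2 hp.le⟩)
    (by
      rw [Set.uIcc_of_le (by norm_num)]
      exact hg2)
  simp only [Function.comp] at key
  rw [Real.zero_rpow (ne_of_gt hp), Real.one_rpow] at key
  exact key

lemma calc_main {a θX θY lam : ℝ} (ha0 : 0 < a) (ha1 : a < 1) (hθX : 1 ≤ θX) (hθY : 1 ≤ θY)
    (hlam : 0 < lam) :
    ∫ t in (0:ℝ)..1, t ^ ((a*θX)/lam) * (2 * t ^ ((1-a)/lam) - 1 + (1 - t ^ ((1-a)/lam)) ^ θY)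
      = 2 * lam / (a * (θX - 1) + 1 + lam) - lam / (a * θX + lam)
        + (lam * θY / ((1 - a) * θY + a * θX + lam)) * Beta ((a * θX + lam) / (1 - a)) θY := by
  set c₂ : ℝ := a * θX + lam with hc₂def
  set c₁ : ℝ := a * (θX - 1) + 1 + lam with hc₁def
  have hb : (0:ℝ) < 1 - a := by linarith
  have hθX0 : 0 < θX := by linarith
  have hθY0 : 0 < θY := by linarith
  have hc₂ : 0 < c₂ := by positivity
  have hc₁ : 0 < c₁ := by nlinarith
  have hc₁1 : 1 < c₁ := by nlinarith
  set x₀ : ℝ := c₂ / (1 - a) with hx₀def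
  have hx₀ : 0 < x₀ := by positivity
  -- H is continuous
  have hHcont : Continuous (fun t : ℝ =>
      t ^ ((a*θX)/lam) * (2 * t ^ ((1-a)/lam) - 1 + (1 - t ^ ((1-a)/lam)) ^ θY)) := by
    have h1 : Continuous fun t : ℝ => t ^ ((a*θX)/lam) := cont_rpow (by positivity)
    have h2 : Continuous fun t : ℝ => t ^ ((1-a)/lam) := cont_rpow (by positivity)
    have h3 : Continuous fun t : ℝ => (1 - t ^ ((1-a)/lam)) ^ θY :=
      (cont_rpow hθY0).comp (continuous_const.sub h2)
    exact h1.mul (((continuous_const.mul h2).sub continuous_const).add h3)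
  -- step 1 : substitution t = x ^ lam
  have step1 : ∫ t in (0:ℝ)..1, t ^ ((a*θX)/lam) * (2 * t ^ ((1-a)/lam) - 1 + (1 - t ^ ((1-a)/lam)) ^ θY)
      = ∫ x in (0:ℝ)..1,
          ((x^lam) ^ ((a*θX)/lam) * (2 * (x^lam) ^ ((1-a)/lam) - 1 + (1 - (x^lam) ^ ((1-a)/lam)) ^ θY))
            * (lam * x ^ (lam - 1)) := by
    refine (sub_rpow hlam (hHcont.integrableOn_Icc) hHcont.continuousOn ?_).symm
    rw [← intervalIntegrable_iff_integrableOn_Icc_of_le (by norm_num)]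
    exact (intervalIntegral.intervalIntegrable_rpow' (by linarith)).const_mul lam
      |>.continuousOn_mul (hHcont.comp (cont_rpow hlam)).continuousOn
  -- step 2 : rewrite integrand
  have step2 : ∫ x in (0:ℝ)..1,
          ((x^lam) ^ ((a*θX)/lam) * (2 * (x^lam) ^ ((1-a)/lam) - 1 + (1 - (x^lam) ^ ((1-a)/lam)) ^ θY))
            * (lam * x ^ (lam - 1))
      = ∫ x in (0:ℝ)..1,
          (2 * lam * x ^ (c₁ - 1) - lam * x ^ (c₂ - 1)
            + lam * (x ^ (c₂ - 1) * (1 - x ^ (1-a)) ^ θY)) := by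
    apply intervalIntegral.integral_congr_ae
    apply MeasureTheory.ae_of_all
    intro x hx
    rw [Set.uIoc_of_le (by norm_num)] at hx
    have hx0 : 0 < x := hx.1
    have e1 : (x^lam) ^ ((a*θX)/lam) = x ^ (a*θX) := by
      rw [← Real.rpow_mul hx0.le]
      congr 1
      field_simp
    have e2 : (x^lam) ^ ((1-a)/lam) = x ^ (1-a) := by
      rw [← Real.rpow_mul hx0.le]
      congr 1
      field_simp
    rw [e1, e2]
    have m1 : x ^ (a*θX) * x ^ (1-a) * x ^ (lam - 1) = x ^ (c₁ - 1) := by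
      rw [← Real.rpow_add hx0, ← Real.rpow_add hx0]
      congr 1
      rw [hc₁def]; ring
    have m2 : x ^ (a*θX) * x ^ (lam - 1) = x ^ (c₂ - 1) := by
      rw [← Real.rpow_add hx0]
      congr 1
      rw [hc₂def]; ring
    calc x ^ (a*θX) * (2 * x ^ (1-a) - 1 + (1 - x ^ (1-a)) ^ θY) * (lam * x ^ (lam - 1))
        = 2 * lam * (x ^ (a*θX) * x ^ (1-a) * x ^ (lam-1))
          - lam * (x ^ (a*θX) * x ^ (lam-1))
          + lam * ((x ^ (a*θX) * x ^ (lam-1)) * (1 - x ^ (1-a)) ^ θY) := by ring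
      _ = _ := by rw [m1, m2]
  -- integrabilities
  have intA : IntervalIntegrable (fun x : ℝ => x ^ (c₁ - 1)) volume 0 1 :=
    intervalIntegral.intervalIntegrable_rpow' (by linarith)
  have intB : IntervalIntegrable (fun x : ℝ => x ^ (c₂ - 1)) volume 0 1 :=
    intervalIntegral.intervalIntegrable_rpow' (by linarith)
  have hcontY : Continuous fun x : ℝ => (1 - x ^ (1-a)) ^ θY :=
    (cont_rpow hθY0).comp (continuous_const.sub (cont_rpow hb))
  have intC : IntervalIntegrable (fun x : ℝ => x ^ (c₂ - 1) * (1 - x ^ (1-a)) ^ θY) volume 0 1 :=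
    intB.mul_continuousOn hcontY.continuousOn
  -- step 3 : split
  have step3 : ∫ x in (0:ℝ)..1,
          (2 * lam * x ^ (c₁ - 1) - lam * x ^ (c₂ - 1)
            + lam * (x ^ (c₂ - 1) * (1 - x ^ (1-a)) ^ θY))
      = 2 * lam * (∫ x in (0:ℝ)..1, x ^ (c₁ - 1))
        - lam * (∫ x in (0:ℝ)..1, x ^ (c₂ - 1))
        + lam * (∫ x in (0:ℝ)..1, x ^ (c₂ - 1) * (1 - x ^ (1-a)) ^ θY) := by
    rw [intervalIntegral.integral_add ((intA.const_mul _).sub (intB.const_mul _)) (intC.const_mul _),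
      intervalIntegral.integral_sub (intA.const_mul _) (intB.const_mul _),
      intervalIntegral.integral_const_mul, intervalIntegral.integral_const_mul,
      intervalIntegral.integral_const_mul]
  -- step 4 : power integrals
  have pow_int : ∀ c : ℝ, 0 < c → (∫ x in (0:ℝ)..1, x ^ (c - 1)) = 1 / c := by
    intro c hc
    rw [integral_rpow (Or.inl (by linarith))]
    rw [sub_add_cancel, Real.one_rpow, Real.zero_rpow (ne_of_gt hc)]
    norm_num
  -- step 5 : Beta substitution for the last integral
  have step5 : (∫ x in (0:ℝ)..1, x ^ (c₂ - 1) * (1 - x ^ (1-a)) ^ θY)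
      = (1 / (1-a)) * Beta x₀ (θY + 1) := by
    have gint : IntervalIntegrable (fun t : ℝ => t ^ (x₀ - 1) * (1 - t) ^ θY) volume 0 1 := by
      have := betaIntegrand_integrable hx₀ (by linarith : (0:ℝ) < θY + 1)
      simpa using this
    have key := sub_rpow hb (g := fun t : ℝ => t ^ (x₀ - 1) * (1 - t) ^ θY)
      ((intervalIntegrable_iff_integrableOn_Icc_of_le (by norm_num)).mp gint)
      ?_ ?_
    · -- key : ∫ x in 0..1, g (x^(1-a)) * ((1-a) * x^(1-a-1)) = ∫ t in 0..1, g t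
      have rhs_eq : (∫ u in (0:ℝ)..1, u ^ (x₀ - 1) * (1 - u) ^ θY) = Beta x₀ (θY + 1) := by
        rw [Beta]
        simp
      have lhs_eq : (∫ x in (0:ℝ)..1, (x ^ (1-a)) ^ (x₀ - 1) * (1 - x ^ (1-a)) ^ θY * ((1-a) * x ^ ((1-a) - 1)))
          = (1-a) * ∫ x in (0:ℝ)..1, x ^ (c₂ - 1) * (1 - x ^ (1-a)) ^ θY := by
        rw [← intervalIntegral.integral_const_mul]
        apply intervalIntegral.integral_congr_ae
        apply MeasureTheory.ae_of_all
        intro x hx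
        rw [Set.uIoc_of_le (by norm_num)] at hx
        have hx0 : 0 < x := hx.1
        have e1 : (x ^ (1-a)) ^ (x₀ - 1) = x ^ ((1-a) * (x₀ - 1)) := by
          rw [← Real.rpow_mul hx0.le]
        have e3 : x ^ ((1-a) * (x₀ - 1)) * x ^ ((1-a) - 1) = x ^ (c₂ - 1) := by
          rw [← Real.rpow_add hx0]
          congr 1
          rw [hx₀def]
          field_simp
          ring
        calc (x ^ (1-a)) ^ (x₀ - 1) * (1 - x ^ (1-a)) ^ θY * ((1-a) * x ^ ((1-a) - 1))
            = (1-a) * ((x ^ ((1-a) * (x₀ - 1)) * x ^ ((1-a) - 1)) * (1 - x ^ (1-a)) ^ θY) := by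
              rw [e1]; ring
          _ = (1-a) * (x ^ (c₂ - 1) * (1 - x ^ (1-a)) ^ θY) := by rw [e3]
      rw [lhs_eq, rhs_eq] at key
      rw [← key]
      field_simp
    · -- continuity of g on Ioo 0 1
      intro t ht
      have h1 : ContinuousAt (fun t : ℝ => t ^ (x₀ - 1)) t :=
        Real.continuousAt_rpow_const t _ (Or.inl (ne_of_gt ht.1))
      have h2 : ContinuousAt (fun t : ℝ => (1 - t) ^ θY) t :=
        ((cont_rpow hθY0).comp (continuous_const.sub continuous_id)).continuousAt
      exact (h1.mul h2).continuousWithinAt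
    · -- integrand integrable
      rw [integrableOn_Icc_iff_integrableOn_Ioc]
      apply MeasureTheory.IntegrableOn.congr_fun
        (f := fun x : ℝ => (1-a) * (x ^ (c₂ - 1) * (1 - x ^ (1-a)) ^ θY))
      · exact (intervalIntegrable_iff_integrableOn_Ioc_of_le (by norm_num)).mp
          (intC.const_mul (1-a))
      · intro x hx
        have hx0 : 0 < x := hx.1
        have e1 : (x ^ (1-a)) ^ (x₀ - 1) = x ^ ((1-a) * (x₀ - 1)) := by
          rw [← Real.rpow_mul hx0.le]
        have e3 : x ^ ((1-a) * (x₀ - 1)) * x ^ ((1-a) - 1) = x ^ (c₂ - 1) := by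
          rw [← Real.rpow_add hx0]
          congr 1
          rw [hx₀def]
          field_simp
          ring
        show (1-a) * (x ^ (c₂ - 1) * (1 - x ^ (1-a)) ^ θY)
            = (x ^ (1-a)) ^ (x₀ - 1) * (1 - x ^ (1-a)) ^ θY * ((1-a) * x ^ ((1-a) - 1))
        rw [e1, ← e3]; ring
      · exact measurableSet_Ioc
  -- step 6 : Beta recurrence and final algebra
  have hrec : Beta x₀ (θY + 1) = θY / (x₀ + θY) * Beta x₀ θY := Beta_rec hx₀ hθY0
  rw [step1, step2, step3, pow_int c₁ hc₁, pow_int c₂ hc₂, step5, hrec]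
  have hx₀b : (1-a) * x₀ = c₂ := by
    rw [hx₀def]; field_simp
  have hden : (1 - a) * θY + a * θX + lam = (1-a) * (x₀ + θY) := by
    rw [mul_add, hx₀b, hc₂def]; ring
  have hx₀θY : 0 < x₀ + θY := by positivity
  rw [hden]
  field_simp

/-- The unit Fréchet distribution function: `F(z) = exp(-1/z)` for `z > 0`, `0` otherwise. -/
noncomputable def frechetCDF (z : ℝ) : ℝ := if 0 < z then Real.exp (-1 / z) else 0

lemma frechetCDF_nonneg (z : ℝ) : 0 ≤ frechetCDF z := by
  unfold frechetCDF; split <;> positivity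

lemma frechetCDF_le_one (z : ℝ) : frechetCDF z ≤ 1 := by
  unfold frechetCDF
  split
  · rw [← Real.exp_zero]
    apply Real.exp_le_exp.mpr
    rw [neg_div]
    simp only [neg_nonpos] at *
    positivity
  · norm_num

lemma frechetCDF_measurable : Measurable frechetCDF := by
  unfold frechetCDF
  apply Measurable.ite (measurableSet_lt measurable_const measurable_id)
  · exact (measurable_const.div measurable_id).exp
  · exact measurable_const

lemma frechet_pow_le_iff {t lam z' : ℝ} (ht0 : 0 < t) (ht1 : t < 1) (hlam : 0 < lam) :
    frechetCDF z' ^ lam ≤ t ↔ z' ≤ lam / (-Real.log t) := by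
  have hL : 0 < -Real.log t := by
    rw [neg_pos]
    exact Real.log_neg ht0 ht1
  have hz : 0 < lam / (-Real.log t) := by positivity
  by_cases hz' : 0 < z'
  · unfold frechetCDF
    rw [if_pos hz']
    rw [Real.rpow_def_of_pos (Real.exp_pos _), Real.log_exp, ← Real.le_log_iff_exp_le ht0]
    have e : -1 / z' * lam = -(lam / z') := by ring
    rw [e]
    constructor
    · intro h
      have h2 : -Real.log t * z' ≤ lam := (le_div_iff₀ hz').mp (by linarith)
      exact (le_div_iff₀ hL).mpr (by linarith)
    · intro h
      have h2 : z' * -Real.log t ≤ lam := (le_div_iff₀ hL).mp h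
      have h3 : -Real.log t ≤ lam / z' := (le_div_iff₀ hz').mpr (by linarith)
      linarith
  · push_neg at hz'
    unfold frechetCDF
    rw [if_neg (not_lt.mpr hz')]
    rw [Real.zero_rpow (ne_of_gt hlam)]
    constructor
    · intro _; linarith
    · intro _; exact ht0.le

/-- Expectation of `max(F(Z₁)^λ, F(Z₂)^λ)` for a max-mixture pair. -/
theorem expectation_max_F_lambda_max_mixture
    {Ω : Type*} [MeasurableSpace Ω] (μ : Measure Ω) [IsProbabilityMeasure μ]
    (Z₁ Z₂ : Ω → ℝ) (hZ₁ : Measurable Z₁) (hZ₂ : Measurable Z₂)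
    (a θX θY lam : ℝ)
    (ha : a ∈ Set.Ioo (0:ℝ) 1) (hθX : θX ∈ Set.Icc (1:ℝ) 2) (hθY : θY ∈ Set.Icc (1:ℝ) 2)
    (hlam : 0 < lam)
    (hm1 : ∀ z : ℝ, (μ {ω | Z₁ ω ≤ z}).toReal = frechetCDF z)
    (hm2 : ∀ z : ℝ, (μ {ω | Z₂ ω ≤ z}).toReal = frechetCDF z)
    (hjoint : ∀ z : ℝ, 0 < z → (μ {ω | Z₁ ω ≤ z ∧ Z₂ ω ≤ z}).toReal =
      Real.exp (-(a * θX) / z) *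
        (2 * Real.exp (-(1 - a) / z) - 1 + (1 - Real.exp (-(1 - a) / z)) ^ θY)) :
    ∫ ω, max (frechetCDF (Z₁ ω) ^ lam) (frechetCDF (Z₂ ω) ^ lam) ∂μ =
      1 - 2 * lam / (a * (θX - 1) + 1 + lam) + lam / (a * θX + lam)
        - (lam * θY / ((1 - a) * θY + a * θX + lam)) *
            Beta ((a * θX + lam) / (1 - a)) θY := by
  obtain ⟨ha0, ha1⟩ := ha
  set g : Ω → ℝ := fun ω => max (frechetCDF (Z₁ ω) ^ lam) (frechetCDF (Z₂ ω) ^ lam) with hgdef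
  have hgmeas : Measurable g :=
    (((cont_rpow hlam).measurable.comp (frechetCDF_measurable.comp hZ₁)).max
      ((cont_rpow hlam).measurable.comp (frechetCDF_measurable.comp hZ₂)))
  have hg0 : ∀ ω, 0 ≤ g ω := fun ω =>
    le_max_of_le_left (Real.rpow_nonneg (frechetCDF_nonneg _) _)
  have hg1 : ∀ ω, g ω ≤ 1 := fun ω => max_le
    (Real.rpow_le_one (frechetCDF_nonneg _) (frechetCDF_le_one _) hlam.le)
    (Real.rpow_le_one (frechetCDF_nonneg _) (frechetCDF_le_one _) hlam.le)
  have hgint : Integrable g μ := by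
    refine ⟨hgmeas.aestronglyMeasurable, MeasureTheory.HasFiniteIntegral.of_bounded (C := 1) ?_⟩
    apply MeasureTheory.ae_of_all
    intro ω
    rw [Real.norm_eq_abs, abs_of_nonneg (hg0 ω)]
    exact hg1 ω
  rw [hgint.integral_eq_integral_meas_lt (MeasureTheory.ae_of_all μ hg0)]
  -- the layer function
  set ψ : ℝ → ℝ := fun t =>
    1 - t ^ ((a*θX)/lam) * (2 * t ^ ((1-a)/lam) - 1 + (1 - t ^ ((1-a)/lam)) ^ θY) with hψdef
  have claimA : ∀ t ∈ Set.Ioo (0:ℝ) 1, (μ {ω | t < g ω}).toReal = ψ t := by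
    intro t ⟨ht0, ht1⟩
    set z : ℝ := lam / (-Real.log t) with hzdef
    have hL : 0 < -Real.log t := by rw [neg_pos]; exact Real.log_neg ht0 ht1
    have hz : 0 < z := by positivity
    have hset : {ω | g ω ≤ t} = {ω | Z₁ ω ≤ z ∧ Z₂ ω ≤ z} := by
      ext ω
      simp only [Set.mem_setOf_eq, hgdef, max_le_iff]
      rw [frechet_pow_le_iff ht0 ht1 hlam, frechet_pow_le_iff ht0 ht1 hlam]
    have hcompl : {ω | t < g ω} = {ω | g ω ≤ t}ᶜ := by
      ext ω; simp [not_le]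
    have hmeas_le : MeasurableSet {ω | g ω ≤ t} := hgmeas measurableSet_Iic
    rw [hcompl, prob_compl_eq_one_sub hmeas_le, hset]
    rw [ENNReal.toReal_sub_of_le (prob_le_one) ENNReal.one_ne_top, ENNReal.toReal_one]
    rw [hjoint z hz]
    have hexp : ∀ c : ℝ, Real.exp (-c / z) = t ^ (c / lam) := by
      intro c
      rw [Real.rpow_def_of_pos ht0]
      congr 1
      rw [hzdef]
      field_simp
    rw [hψdef]
    have h1 := hexp (a * θX)
    have h2 := hexp (1 - a)
    rw [neg_div] at h1 h2  -- adjust shapes if needed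
    simp only []
    rw [← h1, ← h2]
    ring_nf
  have claimB : ∀ t ∈ Set.Ici (1:ℝ), (μ {ω | t < g ω}).toReal = 0 := by
    intro t ht
    have : {ω | t < g ω} = ∅ := by
      ext ω
      simp only [Set.mem_setOf_eq, Set.mem_empty_iff_false, iff_false, not_lt]
      exact (hg1 ω).trans ht
    rw [this]
    simp
  -- restrict integral to Ioo 0 1
  have hres : ∫ t in Set.Ioi (0:ℝ), (μ {ω | t < g ω}).toReal
      = ∫ t in Set.Ioo (0:ℝ) 1, ψ t := by
    rw [MeasureTheory.setIntegral_congr_fun (measurableSet_Ioi)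
      (g := Set.indicator (Set.Ioo (0: ℝ) 1) ψ) ?_]
    · rw [MeasureTheory.setIntegral_indicator measurableSet_Ioo,
        Set.inter_eq_self_of_subset_right (fun x hx => hx.1)]
    · intro t ht
      by_cases h : t ∈ Set.Ioo (0:ℝ) 1
      · rw [Set.indicator_of_mem h]
        exact claimA t h
      · rw [Set.indicator_of_notMem h]
        apply claimB
        simp only [Set.mem_Ioo, not_and, not_lt] at h
        exact h ht
  simp only [measureReal_def]
  rw [hres]
  -- convert to interval integral and compute
  have hHcont : Continuous (fun t : ℝ =>
      t ^ ((a*θX)/lam) * (2 * t ^ ((1-a)/lam) - 1 + (1 - t ^ ((1-a)/lam)) ^ θY)) := by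
    have hθX0 : (0:ℝ) < θX := by linarith [hθX.1]
    have h1 : Continuous fun t : ℝ => t ^ ((a*θX)/lam) := cont_rpow (by positivity)
    have h2 : Continuous fun t : ℝ => t ^ ((1-a)/lam) := cont_rpow (div_pos (by linarith) hlam)
    have h3 : Continuous fun t : ℝ => (1 - t ^ ((1-a)/lam)) ^ θY :=
      (cont_rpow (by linarith [hθY.1] : (0:ℝ) < θY)).comp (continuous_const.sub h2)
    exact h1.mul (((continuous_const.mul h2).sub continuous_const).add h3)
  have : ∫ t in Set.Ioo (0:ℝ) 1, ψ t = ∫ t in (0:ℝ)..1, ψ t := by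
    rw [intervalIntegral.integral_of_le (by norm_num), MeasureTheory.integral_Ioc_eq_integral_Ioo]
  rw [this, hψdef]
  rw [intervalIntegral.integral_sub intervalIntegrable_const
    (hHcont.intervalIntegrable 0 1)]
  rw [intervalIntegral.integral_const]
  rw [calc_main ha0 ha1 hθX.1 hθY.1 hlam]
  norm_num
  ring
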